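/- Kelvin–Noether theorem (abstract, matrix group version): suppose $\xi(t) \in \mathfrak{g}$ and $a(t) \in V^*$ satisfy the Euler–Poincaré equations $\frac{d}{dt}\mu(t) = \mathrm{ad}^*_{\xi(t)}\mu(t) + b(t) \diamond a(t)$ where $\mu(t) = \frac{\delta l}{\delta\xi}(\xi(t),a(t))$ and $b(t) = \frac{\delta l}{\delta a}(\xi(t),a(t))$, together with $\dot a = -\xi a$. Let $g(t)$ solve $\dot g = g\xi$, $g(0) = e$, let $\mathcal{K} : \mathcal{C} \times V^* \to \mathfrak{g}^{**}$ be $G$-equivariant, fix $c_0 \in \mathcal{C}$ and set $c(t)=g(t)^{-1}c_0$, and define $I(t) = \langle \mathcal{K}(c(t),a(t)), \mu(t)\rangle$. Then $\frac{d}{dt}I(t) = \langle \mathcal{K}(c(t),a(t)), b(t) \diamond a(t)\rangle$. -/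

import Mathlib

open Matrix

attribute [local instance] Matrix.normedAddCommGroup Matrix.normedSpace

variable {n m : ℕ}

/-- Conjugation `η ↦ u η u⁻¹` (the adjoint action `Ad_u`) as a continuous linear map. -/
noncomputable def AdCLM (u : (Matrix (Fin n) (Fin n) ℝ)ˣ) :
    Matrix (Fin n) (Fin n) ℝ →L[ℝ] Matrix (Fin n) (Fin n) ℝ :=
  LinearMap.toContinuousLinearMap
    ((LinearMap.mulRight ℝ (↑u⁻¹ : Matrix (Fin n) (Fin n) ℝ)).comp
      (LinearMap.mulLeft ℝ (↑u : Matrix (Fin n) (Fin n) ℝ)))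

/-- The diamond map: given a representation `π` of the matrix Lie algebra on `ℝ^m`,
a covector `b ∈ V**` (identified with `v ∈ V`) and `a ∈ V*`, the functional
`η ↦ ⟨v ⋄ a, η⟩ = ⟨a, η v⟩ = b((π η)ᵀ a)` on the Lie algebra. -/
noncomputable def diamondCLM
    (π : Matrix (Fin n) (Fin n) ℝ →ₐ[ℝ] Matrix (Fin m) (Fin m) ℝ)
    (b : (Fin m → ℝ) →L[ℝ] ℝ) (aV : Fin m → ℝ) :
    Matrix (Fin n) (Fin n) ℝ →L[ℝ] ℝ :=
  LinearMap.toContinuousLinearMap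
    { toFun := fun η => b ((π η)ᵀ *ᵥ aV)
      map_add' := by
        intro x y
        simp [map_add, Matrix.transpose_add, Matrix.add_mulVec]
      map_smul' := by
        intro c x
        simp [_root_.map_smul, Matrix.transpose_smul, Matrix.smul_mulVec] }

/-- The induced action of the Lie algebra element `x` on `a ∈ V*`:
`x • a = -(π x)ᵀ a`, so that `⟨x • a, v⟩ = -⟨a, x v⟩`. -/
def coact (π : Matrix (Fin n) (Fin n) ℝ →ₐ[ℝ] Matrix (Fin m) (Fin m) ℝ)
    (x : Matrix (Fin n) (Fin n) ℝ) (aV : Fin m → ℝ) : Fin m → ℝ :=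
  -((π x)ᵀ *ᵥ aV)


noncomputable instance matCLMNormedAddCommGroup {F : Type*} [NormedAddCommGroup F] [NormedSpace ℝ F] :
    NormedAddCommGroup (Matrix (Fin n) (Fin n) ℝ →L[ℝ] F) :=
  ContinuousLinearMap.toNormedAddCommGroup

noncomputable instance matCLMNormedSpace {F : Type*} [NormedAddCommGroup F] [NormedSpace ℝ F] :
    NormedSpace ℝ (Matrix (Fin n) (Fin n) ℝ →L[ℝ] F) :=
  ContinuousLinearMap.toNormedSpace

lemma contDiff_entry (i j : Fin n) :
    ContDiff ℝ (⊤ : ℕ∞) (fun A : Matrix (Fin n) (Fin n) ℝ => A i j) :=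
  contDiff_pi.1 (contDiff_pi.1 contDiff_id i) j

lemma contDiff_det :
    ContDiff ℝ (⊤ : ℕ∞) (fun A : Matrix (Fin n) (Fin n) ℝ => A.det) := by
  simp only [Matrix.det_apply]
  apply ContDiff.sum
  intro σ _
  have h : ContDiff ℝ (⊤ : ℕ∞) (fun A : Matrix (Fin n) (Fin n) ℝ => ∏ i, A (σ i) i) :=
    contDiff_prod fun i _ => contDiff_entry (σ i) i
  have := h.const_smul ((Equiv.Perm.sign σ : ℤ) : ℝ)
  convert this using 2 with A
  simp [Units.smul_def, zsmul_eq_mul]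

lemma contDiff_adjugate :
    ContDiff ℝ (⊤ : ℕ∞) (fun A : Matrix (Fin n) (Fin n) ℝ => A.adjugate) := by
  apply contDiff_pi.2; intro i
  apply contDiff_pi.2; intro j
  have h1 : (fun A : Matrix (Fin n) (Fin n) ℝ => A.adjugate i j)
      = fun A => ((Aᵀ).updateCol j (Pi.single i 1)).det := by
    funext A
    rw [Matrix.adjugate_def]
    simp [Matrix.cramer_apply]
  rw [h1]
  apply contDiff_det.comp
  apply contDiff_pi.2; intro k
  apply contDiff_pi.2; intro l
  simp only [Matrix.updateCol_apply]
  by_cases hl : l = j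
  · simp only [hl, if_true, if_pos rfl]
    exact contDiff_const
  · simp only [hl, if_false]
    exact contDiff_entry l k

noncomputable def mulCLM :
    Matrix (Fin n) (Fin n) ℝ →L[ℝ] Matrix (Fin n) (Fin n) ℝ →L[ℝ] Matrix (Fin n) (Fin n) ℝ :=
  LinearMap.toContinuousLinearMap
    { toFun := fun p => LinearMap.toContinuousLinearMap (LinearMap.mulLeft ℝ p)
      map_add' := by intro x y; ext z; simp [add_mul]
      map_smul' := by intro c x; ext z; simp [smul_mul_assoc] }

@[simp] lemma mulCLM_apply (p q : Matrix (Fin n) (Fin n) ℝ) : mulCLM p q = p * q := rfl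

noncomputable def entryCLM (i j : Fin n) : Matrix (Fin n) (Fin n) ℝ →L[ℝ] ℝ :=
  LinearMap.toContinuousLinearMap
    { toFun := fun A => A i j, map_add' := by intros; rfl, map_smul' := by intros; rfl }

lemma entryCLM_apply (i j : Fin n) (A : Matrix (Fin n) (Fin n) ℝ) : entryCLM i j A = A i j := rfl

lemma single_eq_smul (k l : Fin n) (c : ℝ) :
    Matrix.single k l c = c • Matrix.single k l (1 : ℝ) := by
  rw [Matrix.smul_single, smul_eq_mul, mul_one]

lemma sum_entries_apply (φ : Matrix (Fin n) (Fin n) ℝ →L[ℝ] ℝ) (M : Matrix (Fin n) (Fin n) ℝ) :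
    ∑ k, ∑ l, M k l * φ (Matrix.single k l 1) = φ M := by
  conv_rhs => rw [Matrix.matrix_eq_sum_single M]
  simp only [map_sum]
  refine Finset.sum_congr rfl fun k _ => Finset.sum_congr rfl fun l _ => ?_
  rw [single_eq_smul k l (M k l), _root_.map_smul, smul_eq_mul]

lemma clm_eq_sum (v : Matrix (Fin n) (Fin n) ℝ →L[ℝ] ℝ) :
    v = ∑ i, ∑ j, v (Matrix.single i j 1) • entryCLM i j := by
  refine ContinuousLinearMap.ext fun η => ?_
  simp only [ContinuousLinearMap.sum_apply, ContinuousLinearMap.smul_apply, entryCLM_apply,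
    smul_eq_mul]
  rw [← sum_entries_apply v η]
  exact Finset.sum_congr rfl fun i _ => Finset.sum_congr rfl fun j _ => mul_comm _ _

lemma hasDerivAt_of_entries {F : ℝ → Matrix (Fin n) (Fin n) ℝ} {F' : Matrix (Fin n) (Fin n) ℝ}
    {t : ℝ} (h : ∀ i j, HasDerivAt (fun s => F s i j) (F' i j) t) : HasDerivAt F F' t := by
  have e : F = fun s => ∑ i, ∑ j, F s i j • Matrix.single i j (1 : ℝ) := funext fun s => by
    conv_lhs => rw [Matrix.matrix_eq_sum_single (F s)]
    simp only [← single_eq_smul]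
  have e' : F' = ∑ i, ∑ j, F' i j • Matrix.single i j (1 : ℝ) := by
    conv_lhs => rw [Matrix.matrix_eq_sum_single F']
    simp only [← single_eq_smul]
  rw [e, e']
  exact HasDerivAt.fun_sum fun i _ => HasDerivAt.fun_sum fun j _ => (h i j).smul_const _

lemma HasDerivAt.matEntry {f : ℝ → Matrix (Fin n) (Fin n) ℝ} {f' : Matrix (Fin n) (Fin n) ℝ}
    {t : ℝ} (hf : HasDerivAt f f' t) (i j : Fin n) :
    HasDerivAt (fun s => f s i j) (f' i j) t := by
  have := (entryCLM i j).hasFDerivAt.comp_hasDerivAt t hf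
  exact this

lemma HasDerivAt.const_matmul {f : ℝ → Matrix (Fin n) (Fin n) ℝ} {f' : Matrix (Fin n) (Fin n) ℝ}
    {t : ℝ} (E : Matrix (Fin n) (Fin n) ℝ) (hf : HasDerivAt f f' t) :
    HasDerivAt (fun s => E * f s) (E * f') t := by
  apply hasDerivAt_of_entries
  intro i j
  simp only [Matrix.mul_apply]
  exact HasDerivAt.fun_sum fun k _ => (hf.matEntry k j).const_mul (E i k)

lemma HasDerivAt.matmul {f g : ℝ → Matrix (Fin n) (Fin n) ℝ} {f' g' : Matrix (Fin n) (Fin n) ℝ}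
    {t : ℝ} (hf : HasDerivAt f f' t) (hg : HasDerivAt g g' t) :
    HasDerivAt (fun s => f s * g s) (f' * g t + f t * g') t := by
  apply hasDerivAt_of_entries
  intro i j
  simp only [Matrix.mul_apply, Matrix.add_apply, ← Finset.sum_add_distrib]
  exact HasDerivAt.fun_sum fun k _ => (hf.matEntry i k).mul (hg.matEntry k j)

noncomputable def mulVecCLM :
    Matrix (Fin m) (Fin m) ℝ →L[ℝ] (Fin m → ℝ) →L[ℝ] (Fin m → ℝ) :=
  LinearMap.toContinuousLinearMap
    { toFun := fun M => LinearMap.toContinuousLinearMap (M.mulVecLin)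
      map_add' := by intro x y; ext z; simp [Matrix.add_mulVec]
      map_smul' := by intro c x; ext z; simp [Matrix.smul_mulVec] }

@[simp] lemma mulVecCLM_apply (M : Matrix (Fin m) (Fin m) ℝ) (v : Fin m → ℝ) :
    mulVecCLM M v = M *ᵥ v := rfl

lemma HasDerivAt.matmulVec {M : ℝ → Matrix (Fin m) (Fin m) ℝ} {v : ℝ → Fin m → ℝ}
    {M' : Matrix (Fin m) (Fin m) ℝ} {v' : Fin m → ℝ} {t : ℝ}
    (hM : HasDerivAt M M' t) (hv : HasDerivAt v v' t) :
    HasDerivAt (fun s => M s *ᵥ v s) (M' *ᵥ v t + M t *ᵥ v') t := by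
  have hc : HasDerivAt (fun s => mulVecCLM (M s)) (mulVecCLM M') t := by
    have := mulVecCLM.hasFDerivAt.comp_hasDerivAt t hM; exact this
  simpa using hc.clm_apply hv
lemma hasDerivAt_matrix_inv {g ξ : ℝ → Matrix (Fin n) (Fin n) ℝ}
    (hg : ∀ t, HasDerivAt g (g t * ξ t) t) (hu : ∀ t, IsUnit (g t)) (t : ℝ) :
    HasDerivAt (fun s => (g s)⁻¹) (-(ξ t * (g t)⁻¹)) t := by
  have hdet : ∀ s, IsUnit (g s).det := fun s => (Matrix.isUnit_iff_isUnit_det _).1 (hu s)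
  have hdiff : DifferentiableAt ℝ (fun s => (g s)⁻¹) t := by
    have h1 : (fun s => (g s)⁻¹) = fun s => ((g s).det)⁻¹ • (g s).adjugate := by
      funext s; rw [Matrix.inv_def, Ring.inverse_eq_inv']
    rw [h1]
    have hgd : DifferentiableAt ℝ g t := (hg t).differentiableAt
    have h2 : DifferentiableAt ℝ (fun s => (g s).det) t :=
      (contDiff_det.differentiable (by simp) _).comp t hgd
    have h3 : DifferentiableAt ℝ (fun s => ((g s).det)⁻¹) t :=
      h2.inv (hdet t).ne_zero
    exact h3.smul ((contDiff_adjugate.differentiable (by simp) _).comp t hgd)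
  obtain ⟨D, hD⟩ : ∃ D, HasDerivAt (fun s => (g s)⁻¹) D t := ⟨_, hdiff.hasDerivAt⟩
  have hconst : (fun s => g s * (g s)⁻¹) = fun _ => (1 : Matrix (Fin n) (Fin n) ℝ) := by
    funext s; exact Matrix.mul_nonsing_inv _ (hdet s)
  have hmul : HasDerivAt (fun s => g s * (g s)⁻¹)
      (g t * ξ t * (g t)⁻¹ + g t * D) t := (hg t).matmul hD
  have hzero : HasDerivAt (fun s => g s * (g s)⁻¹) 0 t := by
    rw [hconst]; exact hasDerivAt_const t 1
  have key : g t * ξ t * (g t)⁻¹ + g t * D = 0 := hmul.unique hzero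
  have h2 := congrArg (fun M => (g t)⁻¹ * M) key
  simp only [Matrix.mul_add, Matrix.mul_zero, ← Matrix.mul_assoc,
    Matrix.nonsing_inv_mul _ (hdet t), Matrix.one_mul] at h2
  have hDval : D = -(ξ t * (g t)⁻¹) := eq_neg_of_add_eq_zero_right h2
  rwa [hDval] at hD
/- The Kelvin–Noether theorem (matrix group version): along solutions of the
Euler–Poincaré equations with advected quantity `a`,
`d/dt ⟨𝒦(c(t),a(t)), μ(t)⟩ = ⟨𝒦(c(t),a(t)), b(t) ⋄ a(t)⟩` where `c(t) = g(t)⁻¹ c₀`. -/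
theorem kelvin_noether
    (π : Matrix (Fin n) (Fin n) ℝ →ₐ[ℝ] Matrix (Fin m) (Fin m) ℝ)
    {C : Type*} [MulAction (Matrix (Fin n) (Fin n) ℝ)ˣ C]
    -- the Lagrangian and its partial functional derivatives
    (l : Matrix (Fin n) (Fin n) ℝ → (Fin m → ℝ) → ℝ)
    (hl : ContDiff ℝ (⊤ : ℕ∞) (fun p : Matrix (Fin n) (Fin n) ℝ × (Fin m → ℝ) => l p.1 p.2))
    (ξ : ℝ → Matrix (Fin n) (Fin n) ℝ) (a : ℝ → Fin m → ℝ)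
    (hξ : ContDiff ℝ (⊤ : ℕ∞) ξ) (ha' : ContDiff ℝ (⊤ : ℕ∞) a)
    (μ : ℝ → (Matrix (Fin n) (Fin n) ℝ →L[ℝ] ℝ))
    (hμ : ∀ t, μ t = fderiv ℝ (fun x => l x (a t)) (ξ t))
    (b : ℝ → ((Fin m → ℝ) →L[ℝ] ℝ))
    (hb : ∀ t, b t = fderiv ℝ (l (ξ t)) (a t))
    -- the Euler–Poincaré equations:  dμ/dt = ad⁎_ξ μ + b ⋄ a,  da/dt = -ξ a
    (hEP : ∀ (η : Matrix (Fin n) (Fin n) ℝ) (t : ℝ),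
      HasDerivAt (fun s => μ s η) (μ t ⁅ξ t, η⁆ + diamondCLM π (b t) (a t) η) t)
    (hadv : ∀ t : ℝ, HasDerivAt a (-(coact π (ξ t) (a t))) t)
    -- reconstruction:  g' = g ξ,  g(0) = e
    (g : ℝ → Matrix (Fin n) (Fin n) ℝ)
    (hg : ∀ t : ℝ, HasDerivAt g (g t * ξ t) t) (hg0 : g 0 = 1)
    (hu : ∀ t, IsUnit (g t))
    -- the equivariant Kelvin–Noether map 𝒦 : C × V* → 𝔤**
    (K : C → (Fin m → ℝ) → ((Matrix (Fin n) (Fin n) ℝ →L[ℝ] ℝ) →ₗ[ℝ] ℝ))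
    (hK : ∀ (u : (Matrix (Fin n) (Fin n) ℝ)ˣ) (c : C) (aV : Fin m → ℝ)
        (ν : Matrix (Fin n) (Fin n) ℝ →L[ℝ] ℝ),
      K (u • c) ((π (↑u⁻¹ : Matrix (Fin n) (Fin n) ℝ))ᵀ *ᵥ aV) ν
        = K c aV (ν.comp (AdCLM u)))
    (c₀ : C) :
    ∀ t : ℝ,
      HasDerivAt (fun s => K (((hu s).unit)⁻¹ • c₀) (a s) (μ s))
        (K (((hu t).unit)⁻¹ • c₀) (a t) (diamondCLM π (b t) (a t))) t := by
  classical
  intro t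
  -- basic unit facts
  have hcoe : ∀ s, ((hu s).unit : Matrix (Fin n) (Fin n) ℝ) = g s := fun s => (hu s).unit_spec
  have hinvcoe : ∀ s, ((((hu s).unit)⁻¹ : (Matrix (Fin n) (Fin n) ℝ)ˣ) : Matrix (Fin n) (Fin n) ℝ) = (g s)⁻¹ := by
    intro s
    rw [Matrix.coe_units_inv]
    exact congrArg Inv.inv (hcoe s)
  have hdet : ∀ s, IsUnit (g s).det := fun s => (Matrix.isUnit_iff_isUnit_det _).1 (hu s)
  have hmulinv : ∀ s, g s * (g s)⁻¹ = 1 := fun s => Matrix.mul_nonsing_inv _ (hdet s)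
  have hinvmul : ∀ s, (g s)⁻¹ * g s = 1 := fun s => Matrix.nonsing_inv_mul _ (hdet s)
  have hginv' : ∀ s, HasDerivAt (fun r => (g r)⁻¹) (-(ξ s * (g s)⁻¹)) s :=
    hasDerivAt_matrix_inv hg hu
  -- π and transpose as CLM
  let πT : Matrix (Fin n) (Fin n) ℝ →L[ℝ] Matrix (Fin m) (Fin m) ℝ :=
    LinearMap.toContinuousLinearMap
      { toFun := fun M => (π M)ᵀ
        map_add' := by intro x y; simp [Matrix.transpose_add]
        map_smul' := by intro c x; simp [Matrix.transpose_smul] }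
  have hπT : ∀ M, πT M = (π M)ᵀ := fun M => rfl
  -- the advected-pullback A is constant
  let A : ℝ → (Fin m → ℝ) := fun s => (π ((g s)⁻¹))ᵀ *ᵥ a s
  have hadv' : ∀ s, HasDerivAt a ((π (ξ s))ᵀ *ᵥ a s) s := by
    intro s
    have := hadv s
    simpa [coact] using this
  have hA0 : ∀ s, HasDerivAt A 0 s := by
    intro s
    have hM : HasDerivAt (fun r => (π ((g r)⁻¹))ᵀ) (πT (-(ξ s * (g s)⁻¹))) s := by
      have := πT.hasFDerivAt.comp_hasDerivAt s (hginv' s)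
      exact this
    have h := hM.matmulVec (hadv' s)
    convert h using 1
    rw [hπT]
    have e1 : (π (-(ξ s * (g s)⁻¹)))ᵀ = -((π (ξ s) * π ((g s)⁻¹))ᵀ) := by
      rw [map_neg, _root_.map_mul, Matrix.transpose_neg]
    have e2 : (π ((g s)⁻¹))ᵀ *ᵥ ((π (ξ s))ᵀ *ᵥ a s) = (π (ξ s) * π ((g s)⁻¹))ᵀ *ᵥ a s := by
      rw [Matrix.mulVec_mulVec, ← Matrix.transpose_mul]
    rw [e1, e2, Matrix.neg_mulVec, neg_add_cancel]
  have hAconst : ∀ s, A s = a 0 := by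
    intro s
    have hdiffA : Differentiable ℝ A := fun r => (hA0 r).differentiableAt
    have h := is_const_of_deriv_eq_zero hdiffA (fun r => (hA0 r).deriv) s 0
    rw [h]
    show (π ((g 0)⁻¹))ᵀ *ᵥ a 0 = a 0
    rw [hg0]
    simp
  -- the Ad curve
  let Lm : Matrix (Fin n) (Fin n) ℝ → (Matrix (Fin n) (Fin n) ℝ →L[ℝ] Matrix (Fin n) (Fin n) ℝ) := fun p => LinearMap.toContinuousLinearMap (LinearMap.mulLeft ℝ p)
  let Rm : Matrix (Fin n) (Fin n) ℝ → (Matrix (Fin n) (Fin n) ℝ →L[ℝ] Matrix (Fin n) (Fin n) ℝ) := fun q => LinearMap.toContinuousLinearMap (LinearMap.mulRight ℝ q)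
  have hLm : ∀ p x, Lm p x = p * x := fun _ _ => rfl
  have hRm : ∀ q x, Rm q x = x * q := fun _ _ => rfl
  let LmL : Matrix (Fin n) (Fin n) ℝ →L[ℝ] (Matrix (Fin n) (Fin n) ℝ →L[ℝ] Matrix (Fin n) (Fin n) ℝ) :=
    LinearMap.toContinuousLinearMap
      { toFun := Lm
        map_add' := by intro x y; ext z; simp [hLm, add_mul]
        map_smul' := by intro c x; ext z; simp [hLm, smul_mul_assoc] }
  let RmL : Matrix (Fin n) (Fin n) ℝ →L[ℝ] (Matrix (Fin n) (Fin n) ℝ →L[ℝ] Matrix (Fin n) (Fin n) ℝ) :=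
    LinearMap.toContinuousLinearMap
      { toFun := Rm
        map_add' := by intro x y; ext z; simp [hRm, mul_add]
        map_smul' := by intro c x; ext z; simp [hRm, mul_smul_comm] }
  let Ad : ℝ → (Matrix (Fin n) (Fin n) ℝ →L[ℝ] Matrix (Fin n) (Fin n) ℝ) := fun s => AdCLM (((hu s).unit)⁻¹)
  have hAdapply : ∀ s η, Ad s η = (g s)⁻¹ * η * g s := by
    intro s η
    show AdCLM (((hu s).unit)⁻¹) η = _
    simp only [AdCLM, LinearMap.coe_toContinuousLinearMap', LinearMap.coe_comp,
      Function.comp_apply, LinearMap.mulLeft_apply, LinearMap.mulRight_apply]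
    rw [hinvcoe, inv_inv, hcoe]
  have hAdeq : Ad = fun s => (Rm (g s)).comp (Lm ((g s)⁻¹)) := by
    funext s
    ext η
    rw [hAdapply]
    simp [hLm, hRm, Matrix.mul_assoc]
  -- the pulled-back curve ν
  let ν : ℝ → (Matrix (Fin n) (Fin n) ℝ →L[ℝ] ℝ) := fun s => (μ s).comp (Ad s)
  have hν' : ∀ i j : Fin n, HasDerivAt (fun s => ν s (Matrix.single i j 1))
      (((diamondCLM π (b t) (a t)).comp (Ad t)) (Matrix.single i j 1)) t := by
    intro i j
    set E : Matrix (Fin n) (Fin n) ℝ := Matrix.single i j 1 with hE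
    have hX : HasDerivAt (fun s => (g s)⁻¹ * (E * g s))
        (-(ξ t * (g t)⁻¹) * (E * g t) + (g t)⁻¹ * (E * (g t * ξ t))) t :=
      (hginv' t).matmul ((hg t).const_matmul E)
    have hνE : ∀ s, ν s E = ∑ k, ∑ l, ((g s)⁻¹ * (E * g s)) k l * μ s (Matrix.single k l 1) := by
      intro s
      rw [sum_entries_apply]
      show μ s (Ad s E) = μ s ((g s)⁻¹ * (E * g s))
      rw [hAdapply, Matrix.mul_assoc]
    have hd := HasDerivAt.fun_sum (u := Finset.univ) fun k _ =>
      HasDerivAt.fun_sum (u := Finset.univ) fun l _ =>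
        (hX.matEntry k l).mul (hEP (Matrix.single k l 1) t)
    rw [show (fun s => ν s E) = fun s => ∑ k, ∑ l, ((g s)⁻¹ * (E * g s)) k l
        * μ s (Matrix.single k l 1) from funext hνE]
    refine hd.congr_deriv ?_
    have hbr : ∀ k l : Fin n, μ t ⁅ξ t, Matrix.single k l (1 : ℝ)⁆
        = ((μ t).comp (Lm (ξ t) - Rm (ξ t))) (Matrix.single k l 1) := by
      intro k l
      simp only [ContinuousLinearMap.comp_apply, ContinuousLinearMap.sub_apply, hLm, hRm,
        Ring.lie_def]
    simp only [hbr, mul_add, Finset.sum_add_distrib, sum_entries_apply]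
    have h0 : μ t (-(ξ t * (g t)⁻¹) * (E * g t) + (g t)⁻¹ * (E * (g t * ξ t)))
        + ((μ t).comp (Lm (ξ t) - Rm (ξ t))) ((g t)⁻¹ * (E * g t)) = 0 := by
      simp only [ContinuousLinearMap.comp_apply, ContinuousLinearMap.sub_apply, hLm, hRm]
      rw [← map_add]
      have hz : -(ξ t * (g t)⁻¹) * (E * g t) + (g t)⁻¹ * (E * (g t * ξ t))
          + (ξ t * ((g t)⁻¹ * (E * g t)) - (g t)⁻¹ * (E * g t) * ξ t) = 0 := by
        noncomm_ring
      rw [hz, map_zero]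
    have hXA : ((diamondCLM π (b t) (a t)).comp (Ad t)) E
        = diamondCLM π (b t) (a t) ((g t)⁻¹ * (E * g t)) := by
      show diamondCLM π (b t) (a t) (Ad t E) = _
      rw [hAdapply, Matrix.mul_assoc]
    rw [hXA]
    linarith [h0]
  -- identify the Kelvin functional with the pulled-back one
  have hKey : ∀ (s : ℝ) (w : Matrix (Fin n) (Fin n) ℝ →L[ℝ] ℝ),
      K (((hu s).unit)⁻¹ • c₀) (a s) (w.comp (AdCLM ((hu s).unit))) = K c₀ (a 0) w := by
    intro s w
    have h := hK ((hu s).unit) ((((hu s).unit)⁻¹ : (Matrix (Fin n) (Fin n) ℝ)ˣ) • c₀) (a s) w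
    rw [smul_inv_smul] at h
    rw [← h, hinvcoe]
    exact congrArg (fun v => K c₀ v w) (hAconst s)
  have hcancel : ∀ s (w : Matrix (Fin n) (Fin n) ℝ →L[ℝ] ℝ),
      ((w.comp (Ad s)).comp (AdCLM ((hu s).unit))) = w := by
    intro s w
    ext η
    show w (Ad s (AdCLM ((hu s).unit) η)) = w η
    rw [hAdapply]
    have : AdCLM ((hu s).unit) η = g s * η * (g s)⁻¹ := by
      simp only [AdCLM, LinearMap.coe_toContinuousLinearMap', LinearMap.coe_comp,
        Function.comp_apply, LinearMap.mulLeft_apply, LinearMap.mulRight_apply]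
      rw [hcoe, Matrix.coe_units_inv, hcoe]
    rw [this]
    congr 1
    calc (g s)⁻¹ * (g s * η * (g s)⁻¹) * g s
        = ((g s)⁻¹ * g s) * η * ((g s)⁻¹ * g s) := by noncomm_ring
      _ = η := by rw [hinvmul s]; simp
  have hfeq : (fun s => K (((hu s).unit)⁻¹ • c₀) (a s) (μ s)) = fun s => K c₀ (a 0) (ν s) := by
    funext s
    have := hKey s (ν s)
    rw [hcancel s (μ s)] at this
    exact this
  -- conclude
  haveI : FiniteDimensional ℝ (Matrix (Fin n) (Fin n) ℝ →L[ℝ] ℝ) := inferInstance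
  let Lfun : (Matrix (Fin n) (Fin n) ℝ →L[ℝ] ℝ) →L[ℝ] ℝ := LinearMap.toContinuousLinearMap (K c₀ (a 0))
  have hLfun : ∀ w, Lfun w = K c₀ (a 0) w := fun _ => rfl
  rw [hfeq]
  have hmain : HasDerivAt (fun s => Lfun (ν s))
      (Lfun ((diamondCLM π (b t) (a t)).comp (Ad t))) t := by
    have e : ∀ v, Lfun v = ∑ i, ∑ j, v (Matrix.single i j 1) * Lfun (entryCLM i j) := by
      intro v
      conv_lhs => rw [clm_eq_sum v]
      simp only [map_sum, _root_.map_smul, smul_eq_mul]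
    rw [show (fun s => Lfun (ν s)) = fun s => ∑ i, ∑ j, ν s (Matrix.single i j 1)
        * Lfun (entryCLM i j) from funext fun s => e (ν s), e]
    exact HasDerivAt.fun_sum fun i _ => HasDerivAt.fun_sum fun j _ => (hν' i j).mul_const _
  have htarget : Lfun ((diamondCLM π (b t) (a t)).comp (Ad t))
      = K (((hu t).unit)⁻¹ • c₀) (a t) (diamondCLM π (b t) (a t)) := by
    rw [hLfun]
    have := hKey t ((diamondCLM π (b t) (a t)).comp (Ad t))
    rw [hcancel t (diamondCLM π (b t) (a t))] at this
    exact this.symm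
  rw [← htarget]
  exact hmain
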